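/- arXiv:2602.02218 — 3 statements merged into one kernel-verified Lean document; each statement's English description precedes it below -/
import Mathlib

section
/- Let C be a category, and let p : E → C and q : F → C be Grothendieck opfibrations (cocartesian fibrations of 1-categories). Let α : E → F be a functor over C preserving cocartesian morphisms. Then α is an equivalence of categories if and only if for every object c of C, the induced functor on fibers α_c : E_c → F_c is an equivalence of categories. -/
open CategoryTheory

universe v₁ v₂ v₃ u₁ u₂ u₃

variable {E : Type u₁} [Category.{v₁} E] {C : Type u₂} [Category.{v₂} C]

/-- A morphism `f : a ⟶ b` of `E` is cocartesian with respect to `p : E ⥤ C` if every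
`g : a ⟶ c` whose image factors through `p.map f` factors uniquely through `f` by a
morphism with the prescribed image. -/
def IsCocartesianMor (p : E ⥤ C) {a b : E} (f : a ⟶ b) : Prop :=
  ∀ ⦃c : E⦄ (g : a ⟶ c) (w : p.obj b ⟶ p.obj c),
    p.map g = p.map f ≫ w → ∃! h : b ⟶ c, p.map h = w ∧ f ≫ h = g

/-- `p : E ⥤ C` is a Grothendieck opfibration: every arrow `u` of `C` with a lift of its
domain admits a cocartesian lift. -/
def IsOpfibration (p : E ⥤ C) : Prop :=
  ∀ (a : E) ⦃y : C⦄ (u : p.obj a ⟶ y),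
    ∃ (b : E) (f : a ⟶ b) (hb : p.obj b = y),
      p.map f ≫ eqToHom hb = u ∧ IsCocartesianMor p f

/-- A morphism `f : a ⟶ b` is locally cocartesian for `p : E ⥤ C` if every other lift of
`p.map f` with domain `a` factors through `f` by a unique vertical morphism. -/
def IsLocallyCocartesianMor (p : E ⥤ C) {a b : E} (f : a ⟶ b) : Prop :=
  ∀ ⦃c : E⦄ (hc : p.obj c = p.obj b) (g : a ⟶ c),
    p.map g = p.map f ≫ eqToHom hc.symm →
    ∃! h : b ⟶ c, p.map h = eqToHom hc.symm ∧ f ≫ h = g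

/-- The fiber of `p : E ⥤ C` over `c : C`: objects of `E` lying strictly over `c` and
morphisms lying over the identity of `c`. -/
def Fiber (p : E ⥤ C) (c : C) : Type u₁ := {a : E // p.obj a = c}

instance Fiber.category (p : E ⥤ C) (c : C) : Category (Fiber p c) where
  Hom a b := {f : a.1 ⟶ b.1 // p.map f = eqToHom (a.2.trans b.2.symm)}
  id a := ⟨𝟙 a.1, by rw [p.map_id, eqToHom_refl]⟩
  comp f g := ⟨f.1 ≫ g.1, by rw [p.map_comp, f.2, g.2, eqToHom_trans]⟩
  id_comp f := Subtype.ext (Category.id_comp f.1)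
  comp_id f := Subtype.ext (Category.comp_id f.1)
  assoc f g h := Subtype.ext (Category.assoc f.1 g.1 h.1)

/-- The functor induced on fibers by a functor `α : E ⥤ F` over `C`. -/
def fiberFunctor {F : Type u₃} [Category.{v₃} F] (p : E ⥤ C) (q : F ⥤ C) (α : E ⥤ F)
    (h : α ⋙ q = p) (c : C) : Fiber p c ⥤ Fiber q c where
  obj a := ⟨α.obj a.1, (Functor.congr_obj h a.1).trans a.2⟩
  map {a b} f := ⟨α.map f.1, by
    have hh := Functor.congr_hom h f.1
    simp only [Functor.comp_map] at hh
    rw [show q.map (α.map f.1) = (α ⋙ q).map f.1 from rfl] at hh ⊢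
    rw [hh, f.2]
    simp [eqToHom_trans]⟩
  map_id a := Subtype.ext (α.map_id a.1)
  map_comp f g := Subtype.ext (α.map_comp f.1 g.1)

/-!
Because `p` is an opfibration, every morphism `x ⟶ y` of `E` factors as a cocartesian morphism
`x ⟶ b` followed by a morphism of the fiber over `p y`; lifting its image in `C` the same way,
every morphism `α x ⟶ y` of `F` into a fiber factors as `α` of a cocartesian morphism followed by a
fiber morphism, since `α` preserves cocartesian morphisms. A morphism out of a cocartesian one is
determined by its composite with it and its image in `C`, so comparing these factorizations reduces
fullness and faithfulness of `α` to those of the fiber functors. For essential surjectivity of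
`α_c`, an isomorphism `α x ≅ y` factors as `α x ⟶ α b ⟶ y`, where the first arrow is cocartesian
over an isomorphism, hence invertible, so the fiber morphism `α b ⟶ y` is invertible as well.
-/

namespace IsCocartesianMor

variable {p : E ⥤ C} {a b : E} {f : a ⟶ b}

lemma hom_ext (hf : IsCocartesianMor p f) {c : E} {h₁ h₂ : b ⟶ c}
    (hmap : p.map h₁ = p.map h₂) (hcomp : f ≫ h₁ = f ≫ h₂) : h₁ = h₂ :=
  (hf (f ≫ h₁) (p.map h₁) (p.map_comp _ _)).unique ⟨rfl, rfl⟩ ⟨hmap.symm, hcomp.symm⟩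

lemma isIso (hf : IsCocartesianMor p f) [IsIso (p.map f)] : IsIso f := by
  obtain ⟨g, ⟨hg, hfg⟩, -⟩ := hf (𝟙 a) (inv (p.map f)) (by simp)
  exact ⟨g, hfg, hf.hom_ext (by simp [hg]) (by rw [reassoc_of% hfg, Category.comp_id])⟩

lemma exists_fiberHom_comp_eq {c : C} {b y : Fiber p c} {f : a ⟶ b.1}
    (hf : IsCocartesianMor p f) (m : a ⟶ y.1)
    (hm : p.map m = p.map f ≫ eqToHom (b.2.trans y.2.symm)) :
    ∃ v : b ⟶ y, f ≫ v.1 = m :=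
  let ⟨v, ⟨hv, hfv⟩, _⟩ := hf m _ hm
  ⟨⟨v, hv⟩, hfv⟩

end IsCocartesianMor

lemma IsOpfibration.exists_isCocartesianMor_comp {p : E ⥤ C} (hp : IsOpfibration p) {c : C}
    {x : E} (y : Fiber p c) (m : x ⟶ y.1) :
    ∃ (b : Fiber p c) (f : x ⟶ b.1) (v : b ⟶ y), IsCocartesianMor p f ∧ f ≫ v.1 = m := by
  obtain ⟨b, f, hb, hfb, hf⟩ := hp x (p.map m ≫ eqToHom y.2)
  obtain ⟨v, hv⟩ := hf.exists_fiberHom_comp_eq (b := ⟨b, hb⟩) m <| by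
    rw [← cancel_mono (eqToHom y.2), hfb.symm]
    simp
  exact ⟨⟨b, hb⟩, f, v, hf, hv⟩

namespace Fiber

variable (p : E ⥤ C) (c : C)

def ι : Fiber p c ⥤ E where
  obj a := a.1
  map f := f.1

instance : (ι p c).ReflectsIsomorphisms where
  reflects {a b} f (_ : IsIso f.1) :=
    ⟨⟨⟨inv f.1, by simp [f.2]⟩, Subtype.ext (IsIso.hom_inv_id f.1),
      Subtype.ext (IsIso.inv_hom_id f.1)⟩⟩

end Fiber

section FiberFunctor

variable {F : Type u₃} [Category.{v₃} F] {p : E ⥤ C} {q : F ⥤ C} {α : E ⥤ F}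
  (h : α ⋙ q = p)

instance fiberFunctor_faithful [α.Faithful] (c : C) : (fiberFunctor p q α h c).Faithful where
  map_injective hfg := Subtype.ext (α.map_injective (congrArg Subtype.val hfg))

instance fiberFunctor_full [α.Full] (c : C) : (fiberFunctor p q α h c).Full where
  map_surjective {a b} g := by
    subst h
    obtain ⟨f, hf⟩ := α.map_surjective g.1
    exact ⟨⟨f, by rw [Functor.comp_map, hf]; exact g.2⟩, Subtype.ext hf⟩

lemma exists_map_isCocartesianMor_comp (hp : IsOpfibration p)
    (hα : ∀ {a b : E} (f : a ⟶ b), IsCocartesianMor p f → IsCocartesianMor q (α.map f))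
    {c : C} {x : E} (y : Fiber q c) (g : α.obj x ⟶ y.1) :
    ∃ (b : Fiber p c) (f : x ⟶ b.1) (k : (fiberFunctor p q α h c).obj b ⟶ y),
      IsCocartesianMor p f ∧ α.map f ≫ k.1 = g := by
  subst h
  obtain ⟨b, f, hb, hfb, hf⟩ := hp x (q.map g ≫ eqToHom y.2)
  obtain ⟨k, hk⟩ := (hα f hf).exists_fiberHom_comp_eq
    (b := (fiberFunctor _ q α rfl c).obj ⟨b, hb⟩) g <| by
    rw [← cancel_mono (eqToHom y.2), ← hfb]
    simp only [Functor.comp_map, Category.assoc, eqToHom_trans]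
    rfl
  exact ⟨⟨b, hb⟩, f, k, hf, hk⟩

lemma fiberFunctor_essSurj (hp : IsOpfibration p)
    (hα : ∀ {a b : E} (f : a ⟶ b), IsCocartesianMor p f → IsCocartesianMor q (α.map f))
    [α.EssSurj] (c : C) : (fiberFunctor p q α h c).EssSurj where
  mem_essImage := by
    rintro ⟨y, rfl⟩
    let φ := α.objObjPreimageIso y
    obtain ⟨⟨b, hb⟩, f, ⟨k, hk⟩, hf, hfk⟩ :=
      exists_map_isCocartesianMor_comp h hp hα (⟨y, rfl⟩ : Fiber q _) φ.hom
    change α.obj b ⟶ y at k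
    change q.map k = _ at hk
    change α.map f ≫ k = φ.hom at hfk
    have : IsIso (q.map (α.map f)) := by
      have hq := congrArg q.map hfk
      rw [q.map_comp, hk] at hq
      rw [(comp_eqToHom_iff _ _ _).mp hq]
      infer_instance
    have := (hα f hf).isIso
    have : IsIso k := IsIso.of_isIso_fac_left hfk
    let K : (fiberFunctor p q α h _).obj ⟨b, hb⟩ ⟶ ⟨y, rfl⟩ := ⟨k, hk⟩
    have : IsIso ((Fiber.ι q _).map K) := ‹IsIso k›
    have := isIso_of_reflects_iso K (Fiber.ι q _)
    exact ⟨⟨b, hb⟩, ⟨asIso K⟩⟩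

lemma faithful_of_fiberFunctor_faithful (hp : IsOpfibration p)
    (hα : ∀ {a b : E} (f : a ⟶ b), IsCocartesianMor p f → IsCocartesianMor q (α.map f))
    (hfib : ∀ c, (fiberFunctor p q α h c).Faithful) : α.Faithful where
  map_injective {x y} m₁ m₂ hm := by
    subst h
    obtain ⟨b, f, v₁, hf, rfl⟩ := hp.exists_isCocartesianMor_comp ⟨y, rfl⟩ m₁
    obtain ⟨v₂, rfl⟩ := hf.exists_fiberHom_comp_eq (y := ⟨y, rfl⟩) m₂ <| by
      simp only [Functor.comp_map, ← hm, Functor.map_comp]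
      exact congrArg (_ ≫ ·) v₁.2
    have hv : (fiberFunctor _ q α rfl _).map v₁ = (fiberFunctor _ q α rfl _).map v₂ :=
      Subtype.ext <| (hα f hf).hom_ext (v₁.2.trans v₂.2.symm) <|
        (α.map_comp _ _).symm.trans (hm.trans (α.map_comp _ _))
    rw [(fiberFunctor _ q α rfl _).map_injective hv]

lemma full_of_fiberFunctor_full (hp : IsOpfibration p)
    (hα : ∀ {a b : E} (f : a ⟶ b), IsCocartesianMor p f → IsCocartesianMor q (α.map f))
    (hfib : ∀ c, (fiberFunctor p q α h c).Full) : α.Full where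
  map_surjective {x y} g := by
    obtain ⟨b, f, k, hf, rfl⟩ := exists_map_isCocartesianMor_comp h hp hα
      ((fiberFunctor p q α h (p.obj y)).obj ⟨y, rfl⟩) g
    obtain ⟨v, rfl⟩ := (fiberFunctor p q α h _).map_surjective k
    exact ⟨f ≫ v.1, α.map_comp _ _⟩

lemma essSurj_of_fiberFunctor_essSurj (hfib : ∀ c, (fiberFunctor p q α h c).EssSurj) : α.EssSurj where
  mem_essImage y :=
    ⟨_, ⟨(Fiber.ι q _).mapIso ((fiberFunctor p q α h (q.obj y)).objObjPreimageIso ⟨y, rfl⟩)⟩⟩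

end FiberFunctor

theorem stmt_5_general {F : Type u₃} [Category.{v₃} F] (p : E ⥤ C) (q : F ⥤ C)
    (hp : IsOpfibration p) (α : E ⥤ F) (h : α ⋙ q = p)
    (hα : ∀ {a b : E} (f : a ⟶ b), IsCocartesianMor p f → IsCocartesianMor q (α.map f)) :
    α.IsEquivalence ↔ ∀ c : C, (fiberFunctor p q α h c).IsEquivalence := by
  refine ⟨fun _ c => ?_, fun hfib => ?_⟩
  · have := fiberFunctor_essSurj h hp hα c
    exact {}
  · have := faithful_of_fiberFunctor_faithful h hp hα fun c => (hfib c).faithful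
    have := full_of_fiberFunctor_full h hp hα fun c => (hfib c).full
    have := essSurj_of_fiberFunctor_essSurj h fun c => (hfib c).essSurj
    exact {}

/-- Let `p : E ⥤ C` and `q : F ⥤ C` be Grothendieck opfibrations and
`α : E ⥤ F` a functor over `C` preserving cocartesian morphisms.  Then `α` is an
equivalence of categories iff for every object `c` of `C` the induced functor on fibers
`α_c : E_c ⥤ F_c` is an equivalence of categories. -/
theorem stmt_5 {F : Type u₃} [Category.{v₃} F] (p : E ⥤ C) (q : F ⥤ C)
    (hp : IsOpfibration p) (hq : IsOpfibration q)
    (α : E ⥤ F) (h : α ⋙ q = p)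
    (hα : ∀ {a b : E} (f : a ⟶ b), IsCocartesianMor p f → IsCocartesianMor q (α.map f)) :
    α.IsEquivalence ↔ ∀ c : C, (fiberFunctor p q α h c).IsEquivalence :=
  stmt_5_general p q hp α h hα
end

section
/- Let p : E → C be a functor of categories such that for every morphism u : x → y in C and every object a with p(a) = x, there exists a locally cocartesian lift of u at a (i.e., an initial object of the category of lifts of u with domain a), and such that the composite of any two locally cocartesian morphisms lying over composable arrows is again locally cocartesian. Then p is a Grothendieck opfibration and every locally cocartesian morphism is cocartesian. -/
open CategoryTheory

universe v₁ v₂ v₃ u₁ u₂ u₃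

variable {E : Type u₁} [Category.{v₁} E] {C : Type u₂} [Category.{v₂} C]

/-- If `p : E ⥤ C` admits locally cocartesian lifts of all arrows (with lifted
domain) and composites of locally cocartesian morphisms are locally cocartesian, then `p` is a
Grothendieck opfibration and every locally cocartesian morphism is cocartesian. -/
theorem stmt_6 (p : E ⥤ C)
    (lifts : ∀ (a : E) ⦃y : C⦄ (u : p.obj a ⟶ y),
      ∃ (b : E) (f : a ⟶ b) (hb : p.obj b = y),
        p.map f ≫ eqToHom hb = u ∧ IsLocallyCocartesianMor p f)
    (compLCC : ∀ {a b c : E} (f : a ⟶ b) (g : b ⟶ c),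
      IsLocallyCocartesianMor p f → IsLocallyCocartesianMor p g →
      IsLocallyCocartesianMor p (f ≫ g)) :
    IsOpfibration p ∧
      ∀ {a b : E} (f : a ⟶ b), IsLocallyCocartesianMor p f → IsCocartesianMor p f := by

  have main : ∀ {a b : E} (f : a ⟶ b), IsLocallyCocartesianMor p f → IsCocartesianMor p f := by
    intro a b f hf c g w hw
    obtain ⟨b', f', hb', hf'w, hf'⟩ := lifts b w
    have hcomp := compLCC f f' hf hf'
    have hgc : p.map g = p.map (f ≫ f') ≫ eqToHom (hb'.symm : p.obj c = p.obj b').symm := by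
      rw [p.map_comp, Category.assoc, hf'w, hw]
    obtain ⟨v, ⟨hv1, hv2⟩, hvu⟩ := hcomp hb'.symm g hgc
    refine ⟨f' ≫ v, ⟨?_, ?_⟩, ?_⟩
    · rw [p.map_comp, hv1]; exact hf'w
    · rw [← Category.assoc]; exact hv2
    · rintro h' ⟨hh1, hh2⟩
      obtain ⟨t, ⟨ht1, ht2⟩, htu⟩ := hf' hb'.symm h' (by rw [hh1, ← hf'w])
      have hv : t = v := hvu t ⟨ht1, by rw [Category.assoc, ht2, hh2]⟩
      rw [← ht2, hv]
  refine ⟨?_, main⟩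
  intro a y u
  obtain ⟨b, f, hb, h1, h2⟩ := lifts a u
  exact ⟨b, f, hb, h1, main f h2⟩
end

section
/- Let C be a category and F₀, F₁ : C → Cat functors with a natural transformation α : F₀ ⇒ F₁. Then the induced functor on Grothendieck constructions ∫α : ∫F₀ → ∫F₁ over C is an equivalence of categories if and only if α_c : F₀(c) → F₁(c) is an equivalence of categories for every object c of C. -/
/-!
`∫α` lies over `C` and restricts on the fiber inclusions to the components of `α`
(`Grothendieck.ιCompMap`), so faithfulness, fullness and essential surjectivity transfer between
`∫α` and the family `α_c` one property at a time. What makes this work is that a morphism of `∫F`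
lying over an identity of `C` comes from the fiber, so an isomorphism of `∫F` over `𝟙 c` is an
isomorphism in `F(c)`; and any isomorphism `X ≅ (c, y)` can be moved over `𝟙 c` by first
transporting `X` along its base isomorphism.
-/

open CategoryTheory

universe v u v₂ u₂

lemma CategoryTheory.Functor.isEquivalence_iff {C D : Type*} [Category* C] [Category* D]
    (F : C ⥤ D) : F.IsEquivalence ↔ F.Faithful ∧ F.Full ∧ F.EssSurj :=
  ⟨fun h ↦ ⟨h.faithful, h.full, h.essSurj⟩, fun ⟨h₁, h₂, h₃⟩ ↦ ⟨h₁, h₂, h₃⟩⟩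

namespace CategoryTheory.Grothendieck

variable {C : Type u} [Category.{v} C]

section Fiber

variable {F : C ⥤ Cat.{v₂, u₂}}

lemma exists_ι_map_eq_of_base_eq_id {c : C} {x y : F.obj c}
    (f : (ι F c).obj x ⟶ (ι F c).obj y) (hf : f.base = 𝟙 c) : ∃ g : x ⟶ y, (ι F c).map g = f := by
  obtain ⟨b, f⟩ := f
  change (F.map b).toFunctor.obj x ⟶ y at f
  dsimp only at hf
  subst hf
  refine ⟨eqToHom (Functor.congr_obj (congrArg Cat.Hom.toFunctor (F.map_id c)) x).symm ≫ f, ?_⟩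
  rw [ι_map]
  congr 1
  exact (eqToHom_trans_assoc _ _ f).trans (Category.id_comp f)

instance (c : C) : (ι F c).ReflectsIsomorphisms where
  reflects {x y} g _ := by
    have hinv : (inv ((ι F c).map g)).base = 𝟙 c :=
      (Category.id_comp _).symm.trans (congrArg Hom.base (IsIso.hom_inv_id ((ι F c).map g)))
    obtain ⟨h, hh⟩ := exists_ι_map_eq_of_base_eq_id (inv ((ι F c).map g)) hinv
    refine ⟨h, (ι F c).map_injective ?_, (ι F c).map_injective ?_⟩
    · rw [Functor.map_comp, hh, IsIso.hom_inv_id, Functor.map_id]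
    · rw [Functor.map_comp, hh, IsIso.inv_hom_id, Functor.map_id]

lemma nonempty_iso_of_base_eq_id {c : C} {x y : F.obj c}
    (e : (⟨c, x⟩ : Grothendieck F) ≅ ⟨c, y⟩) (he : e.hom.base = 𝟙 c) : Nonempty (x ≅ y) := by
  obtain ⟨g, hg⟩ := exists_ι_map_eq_of_base_eq_id e.hom he
  have : IsIso ((ι F c).map g) := by rw [hg]; exact e.isIso_hom
  have := isIso_of_reflects_iso g (ι F c)
  exact ⟨asIso g⟩

end Fiber

variable {F₀ F₁ : C ⥤ Cat.{v₂, u₂}} (α : F₀ ⟶ F₁)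

lemma map_map_ι_map {c : C} {x y : F₀.obj c} (g : x ⟶ y) :
    (map α).map ((ι F₀ c).map g) = (ι F₁ c).map ((α.app c).toFunctor.map g) :=
  (Category.comp_id _).symm.trans (((ιCompMap α c).hom.naturality g).trans (Category.id_comp _))

lemma faithful_map_iff : (map α).Faithful ↔ ∀ c, (α.app c).toFunctor.Faithful := by
  refine ⟨fun _ c ↦ Functor.Faithful.of_comp_iso (ιCompMap α c).symm, fun h ↦ ⟨?_⟩⟩
  rintro X Y ⟨u, f⟩ ⟨u', g⟩ hfg
  obtain rfl : u = u' := congrArg Hom.base hfg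
  have hfib : (eqToHom (α.naturality u).symm).toNatTrans.app X.fiber ≫
      (α.app Y.base).toFunctor.map f =
      (eqToHom (α.naturality u).symm).toNatTrans.app X.fiber ≫ (α.app Y.base).toFunctor.map g :=
    eq_of_heq (Hom.mk.inj hfg).2
  rw [Cat.eqToHom_app, cancel_epi] at hfib
  rw [(α.app Y.base).toFunctor.map_injective hfib]

lemma full_map_iff : (map α).Full ↔ ∀ c, (α.app c).toFunctor.Full := by
  refine ⟨fun _ c ↦ ⟨fun {x y} h ↦ ?_⟩, fun h ↦ ⟨fun {X Y} φ ↦ ?_⟩⟩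
  · let ψ : (map α).obj ((ι F₀ c).obj x) ⟶ (map α).obj ((ι F₀ c).obj y) := (ι F₁ c).map h
    obtain ⟨g, hg⟩ := exists_ι_map_eq_of_base_eq_id ((map α).preimage ψ)
      (congrArg Hom.base ((map α).map_preimage ψ))
    refine ⟨g, (ι F₁ c).map_injective ?_⟩
    rw [← map_map_ι_map, hg, Functor.map_preimage]
    rfl
  · obtain ⟨c, x⟩ := X
    obtain ⟨d, y⟩ := Y
    obtain ⟨u, f⟩ :
        (⟨c, (α.app c).toFunctor.obj x⟩ : Grothendieck F₁) ⟶ ⟨d, (α.app d).toFunctor.obj y⟩ := φ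
    refine ⟨⟨u, (α.app d).toFunctor.preimage (eqToHom ?_ ≫ f)⟩,
      Eq.symm (Grothendieck.ext _ _ rfl ?_)⟩
    · exact Functor.congr_obj (congrArg Cat.Hom.toFunctor (α.naturality u)) x
    · simp only [map_map_fiber, Functor.map_preimage, eqToHom_trans_assoc]
      rfl

lemma essSurj_map_iff : (map α).EssSurj ↔ ∀ c, (α.app c).toFunctor.EssSurj := by
  refine ⟨fun _ c ↦ ⟨fun y ↦ ?_⟩, fun h ↦ ⟨fun Y ↦ ?_⟩⟩
  · let X := (map α).objPreimage ((ι F₁ c).obj y)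
    let e := (map α).objObjPreimageIso ((ι F₁ c).obj y)
    let b : X.base ≅ c := (forget F₁).mapIso e
    -- `X.transport b.hom` lies over `c`, and its isomorphism to `(c, y)` lies over `b⁻¹ ≫ b = 𝟙 c`.
    obtain ⟨i⟩ := nonempty_iso_of_base_eq_id
      (x := (α.app c).toFunctor.obj ((F₀.map b.hom).toFunctor.obj X.fiber))
      ((map α).mapIso (X.transportIso b) ≪≫ e) b.inv_hom_id
    exact ⟨_, ⟨i⟩⟩
  · exact ⟨(ι F₀ Y.base).obj ((α.app Y.base).toFunctor.objPreimage Y.fiber),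
      ⟨(ιCompMap α _).app _ ≪≫
        (ι F₁ _).mapIso ((α.app Y.base).toFunctor.objObjPreimageIso Y.fiber)⟩⟩

end CategoryTheory.Grothendieck

/-- Given functors `F₀ F₁ : C ⥤ Cat` and a natural transformation `α : F₀ ⟶ F₁`,
the induced functor on Grothendieck constructions `∫α : ∫F₀ ⥤ ∫F₁` (over `C`) is an
equivalence of categories if and only if every component `α.app c : F₀(c) ⥤ F₁(c)` is an
equivalence of categories. -/
theorem stmt_19 {C : Type u} [Category.{v} C] (F₀ F₁ : C ⥤ Cat.{v₂, u₂}) (α : F₀ ⟶ F₁) :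
    (Grothendieck.map α).IsEquivalence ↔
      ∀ c : C, (α.app c).toFunctor.IsEquivalence := by
  simp only [Functor.isEquivalence_iff, Grothendieck.faithful_map_iff, Grothendieck.full_map_iff,
    Grothendieck.essSurj_map_iff, forall_and]
end
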